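/- arXiv:2111.06436 — 2 statements merged into one kernel-verified Lean document; each statement's English description precedes it below -/
import Mathlib

section
/- Let N ≥ 2, 1 ≤ k ≤ N−1, p ∈ (1/2,1), q = 1−p, λ = p/q, ϱ = (√p − √q)². For ζ ∈ Ξ_{N,k} and 1 ≤ i ≤ N−1 define V(ζ,i) = λ^{−ζ(i)/2}, with V(ζ,0) = λ^{0} = 1 and V(ζ,N) = λ^{−(N−2k)/2}. Then the asymmetric corner-flip generator satisfies, for every ζ ∈ Ξ_{N,k} and 1 ≤ i ≤ N−1, the discrete Cole–Hopf identity 𝔏^{(p)}_{N,k} V(·,i)(ζ) = √(pq)·( V(ζ,i+1) + V(ζ,i−1) − 2V(ζ,i) ) − ϱ·V(ζ,i). -/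
/-- `ζ` is a height path in `Ξ_{N,k}`: `ζ(0) = 0`, `ζ(N) = N - 2k` and `±1` steps. -/
def HeightPath (N k : ℕ) (ζ : ℕ → ℤ) : Prop :=
  ζ 0 = 0 ∧ ζ N = (N : ℤ) - 2 * k ∧
    ∀ i < N, ζ (i + 1) - ζ i = 1 ∨ ζ (i + 1) - ζ i = -1

/-- The upward corner flip at `j`: the pointwise maximum of `ζ` and `ζ^{(j)}`. -/
def cornerFlipPlus (j : ℕ) (ζ : ℕ → ℤ) : ℕ → ℤ :=
  fun n => if n = j then max (ζ j) (ζ (j - 1) + ζ (j + 1) - ζ j) else ζ n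

/-- The downward corner flip at `j`: the pointwise minimum of `ζ` and `ζ^{(j)}`. -/
def cornerFlipMinus (j : ℕ) (ζ : ℕ → ℤ) : ℕ → ℤ :=
  fun n => if n = j then min (ζ j) (ζ (j - 1) + ζ (j + 1) - ζ j) else ζ n

/-- The exponential observable `V(ζ,i) = λ^{-ζ(i)/2}` with `λ = p/q`. -/
noncomputable def expV (p : ℝ) (ζ : ℕ → ℤ) (i : ℕ) : ℝ :=
  (p / (1 - p)) ^ (-((ζ i : ℝ)) / 2)

/-!
`V(ζ,i) = r ^ ζ(i)` with `r = √q / √p`, and it only sees the height at `i`, so in the generator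
only the flip at `i` contributes. That flip moves `ζ(i)` by `max 0 (s + t)` (up) or `min 0 (s + t)`
(down), where `s, t ∈ {±1}` are the slopes from `i` to its neighbours; in each of the four cases
the identity is an algebraic identity in `√p` and `√q`.
-/

section CornerFlip

variable (ζ : ℕ → ℤ) {j n : ℕ}

theorem cornerFlipPlus_apply_of_ne (h : n ≠ j) : cornerFlipPlus j ζ n = ζ n := if_neg h

theorem cornerFlipMinus_apply_of_ne (h : n ≠ j) : cornerFlipMinus j ζ n = ζ n := if_neg h

theorem cornerFlipPlus_self_sub (j : ℕ) :
    cornerFlipPlus j ζ j - ζ j = max 0 (ζ (j - 1) - ζ j + (ζ (j + 1) - ζ j)) := by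
  simp only [cornerFlipPlus, if_pos]
  omega

theorem cornerFlipMinus_self_sub (j : ℕ) :
    cornerFlipMinus j ζ j - ζ j = min 0 (ζ (j - 1) - ζ j + (ζ (j + 1) - ζ j)) := by
  simp only [cornerFlipMinus, if_pos]
  omega

end CornerFlip

section ExpV

variable {p : ℝ}

theorem expV_eq_zpow (hp0 : 0 ≤ p) (hp1 : p ≤ 1) (ζ : ℕ → ℤ) (n : ℕ) :
    expV p ζ n = (√(1 - p) / √p) ^ ζ n := by
  have hbase : 0 ≤ p / (1 - p) := div_nonneg hp0 (sub_nonneg.2 hp1)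
  rw [expV, show -(ζ n : ℝ) / 2 = -(1 / 2) * ζ n by ring, Real.rpow_mul hbase, Real.rpow_intCast,
    Real.rpow_neg hbase, ← Real.sqrt_eq_rpow, Real.sqrt_div' _ (sub_nonneg.2 hp1), inv_div]

theorem expV_eq_mul_zpow (hp0 : 0 < p) (hp1 : p < 1) (η ζ : ℕ → ℤ) (m n : ℕ) :
    expV p η m = expV p ζ n * (√(1 - p) / √p) ^ (η m - ζ n) := by
  have hr : √(1 - p) / √p ≠ 0 :=
    (div_pos (Real.sqrt_pos.2 (sub_pos.2 hp1)) (Real.sqrt_pos.2 hp0)).ne'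
  rw [expV_eq_zpow hp0.le hp1.le, expV_eq_zpow hp0.le hp1.le, ← zpow_add₀ hr, add_sub_cancel]

end ExpV

theorem single_site_cole_hopf {K : Type*} [Field K] {a b : K} (ha : a ≠ 0) (hb : b ≠ 0) (x : K)
    {s t : ℤ} (hs : s = 1 ∨ s = -1) (ht : t = 1 ∨ t = -1) :
    a ^ 2 * (x * (b / a) ^ max 0 (s + t) - x) + b ^ 2 * (x * (b / a) ^ min 0 (s + t) - x) =
      a * b * (x * (b / a) ^ t + x * (b / a) ^ s - 2 * x) - (a - b) ^ 2 * x := by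
  rcases hs with rfl | rfl <;> rcases ht with rfl | rfl <;> norm_num <;> field_simp <;> ring

theorem corner_flip_cole_hopf_general
    (N k : ℕ)
    (p : ℝ) (hp : 1 / 2 < p) (hp1 : p < 1)
    (ζ : ℕ → ℤ) (hζ : HeightPath N k ζ)
    (i : ℕ) (hi1 : 1 ≤ i) (hi2 : i ≤ N - 1) :
    (∑ j ∈ Finset.Icc 1 (N - 1),
        (p * (expV p (cornerFlipPlus j ζ) i - expV p ζ i) +
          (1 - p) * (expV p (cornerFlipMinus j ζ) i - expV p ζ i))) =
      Real.sqrt (p * (1 - p)) *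
          (expV p ζ (i + 1) + expV p ζ (i - 1) - 2 * expV p ζ i) -
        (Real.sqrt p - Real.sqrt (1 - p)) ^ 2 * expV p ζ i := by
  have hp0 : 0 < p := by linarith
  obtain ⟨-, -, hstep⟩ := hζ
  have hs : ζ (i - 1) - ζ i = 1 ∨ ζ (i - 1) - ζ i = -1 := by
    have h := hstep (i - 1) (by omega)
    rw [Nat.sub_add_cancel hi1] at h
    omega
  have ht := hstep i (by omega)
  rw [Finset.sum_eq_single_of_mem i (Finset.mem_Icc.2 ⟨hi1, hi2⟩) fun j _ hji => by
    simp only [expV, cornerFlipPlus_apply_of_ne ζ (Ne.symm hji),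
      cornerFlipMinus_apply_of_ne ζ (Ne.symm hji), sub_self, mul_zero, add_zero]]
  have key := single_site_cole_hopf (Real.sqrt_pos.2 hp0).ne'
    (Real.sqrt_pos.2 (sub_pos.2 hp1)).ne' (expV p ζ i) hs ht
  rw [Real.sq_sqrt hp0.le, Real.sq_sqrt (sub_pos.2 hp1).le, ← Real.sqrt_mul hp0.le] at key
  rw [expV_eq_mul_zpow hp0 hp1 (cornerFlipPlus i ζ) ζ i i,
    expV_eq_mul_zpow hp0 hp1 (cornerFlipMinus i ζ) ζ i i, expV_eq_mul_zpow hp0 hp1 ζ ζ (i + 1) i,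
    expV_eq_mul_zpow hp0 hp1 ζ ζ (i - 1) i, cornerFlipPlus_self_sub, cornerFlipMinus_self_sub]
  exact key

/-- The discrete Cole–Hopf identity: the asymmetric corner-flip generator applied to
`V(·,i)` equals `√(pq) Δ_D V(ζ,·)(i) - ϱ V(ζ,i)` with `ϱ = (√p - √q)²`. -/
theorem corner_flip_cole_hopf
    (N k : ℕ) (hN : 2 ≤ N) (hk1 : 1 ≤ k) (hk2 : k ≤ N - 1)
    (p : ℝ) (hp : 1 / 2 < p) (hp1 : p < 1)
    (ζ : ℕ → ℤ) (hζ : HeightPath N k ζ)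
    (i : ℕ) (hi1 : 1 ≤ i) (hi2 : i ≤ N - 1) :
    (∑ j ∈ Finset.Icc 1 (N - 1),
        (p * (expV p (cornerFlipPlus j ζ) i - expV p ζ i) +
          (1 - p) * (expV p (cornerFlipMinus j ζ) i - expV p ζ i))) =
      Real.sqrt (p * (1 - p)) *
          (expV p ζ (i + 1) + expV p ζ (i - 1) - 2 * expV p ζ i) -
        (Real.sqrt p - Real.sqrt (1 - p)) ^ 2 * expV p ζ i :=
  corner_flip_cole_hopf_general N k p hp hp1 ζ hζ i hi1 hi2
end

section
/- Let N ≥ 2, let 𝔛_N = {x ∈ ℝ^{N−1} : 0 ≤ x_1 ≤ … ≤ x_{N−1} ≤ N}, and let π_N be the uniform probability measure on 𝔛_N (normalized (N−1)-dimensional Lebesgue measure, with density (N−1)!/N^{N−1}). Then for all bounded measurable f, g : 𝔛_N → ℝ: (a) ∫_{𝔛_N} L_N f(x) dπ_N(x) = 0, i.e. π_N is stationary for L_N; and (b) ∫_{𝔛_N} f(x)·L_N g(x) dπ_N(x) = ∫_{𝔛_N} g(x)·L_N f(x) dπ_N(x), i.e. L_N is self-adjoint in L²(π_N). -/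
open MeasureTheory

noncomputable section

/-- The simplex `𝔛_N = {0 ≤ x_1 ≤ … ≤ x_{N-1} ≤ N}` inside `ℝ^{N-1}`. -/
def simplexSet (N : ℕ) : Set (Fin (N - 1) → ℝ) :=
  {x | (∀ i, 0 ≤ x i ∧ x i ≤ N) ∧ ∀ i j : Fin (N - 1), i ≤ j → x i ≤ x j}

/-- The right neighbour `x_{i+1}` of the `i`-th coordinate, with the convention
`x_N = N`. -/
def upperNbr (N : ℕ) (x : Fin (N - 1) → ℝ) (i : Fin (N - 1)) : ℝ :=
  if h : i.val + 1 < N - 1 then x ⟨i.val + 1, h⟩ else N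

/-- The left neighbour `x_{i-1}` of the `i`-th coordinate, with the convention
`x_0 = 0`. -/
def lowerNbr (N : ℕ) (x : Fin (N - 1) → ℝ) (i : Fin (N - 1)) : ℝ :=
  if 0 < i.val then x ⟨i.val - 1, by have := i.isLt; omega⟩ else 0

/-- The generator of the random walk on the simplex: each coordinate is re-sampled at
rate one, uniformly in the interval delimited by its neighbours. -/
def simplexGen (N : ℕ) (f : (Fin (N - 1) → ℝ) → ℝ) (x : Fin (N - 1) → ℝ) : ℝ :=
  ∑ i : Fin (N - 1),
    ∫ u in (0 : ℝ)..1,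
      (f (Function.update x i (u * upperNbr N x i + (1 - u) * lowerNbr N x i)) - f x)

/-- The uniform probability measure on the simplex `𝔛_N`: normalized Lebesgue measure,
with density `(N-1)!/N^{N-1}`. -/
def simplexMeasure (N : ℕ) : Measure (Fin (N - 1) → ℝ) :=
  (ENNReal.ofReal ((Nat.factorial (N - 1) : ℝ) / (N : ℝ) ^ (N - 1))) •
    (volume.restrict (simplexSet N))

/-!
Fix a coordinate `i`. Inside the simplex, `x_i` ranges over `[x_{i-1}, x_{i+1}]`, an interval
whose endpoints do not depend on `x_i`, and the `i`-th term of `L_N g` is `K_i g - g`, where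
`K_i = resample i` averages `g` over the points obtained by moving `x_i` in that interval.
Integrating along these segments first (Fubini), `∫ f · K_i g` over the simplex becomes an
integral of `(b - a)⁻¹ (∫_a^b f) (∫_a^b g)` over the segments `[a, b]`, which is symmetric in
`f` and `g`. So every term of `L_N` is self-adjoint for Lebesgue measure on the
simplex, and stationarity is self-adjointness tested against `f = 1`, as `L_N 1 = 0`.
-/

open Set Function

namespace SimplexWalk

def segmentAverage (a b : ℝ) (ψ : ℝ → ℝ) : ℝ :=
  ∫ u in (0 : ℝ)..1, ψ (u * b + (1 - u) * a)

theorem segmentAverage_eq {a b : ℝ} (hab : a ≠ b) (ψ : ℝ → ℝ) :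
    segmentAverage a b ψ = (b - a)⁻¹ * ∫ t in a..b, ψ t := by
  have hline : ∀ u : ℝ, u * b + (1 - u) * a = (b - a) * u + a := fun u => by ring
  simp only [segmentAverage, hline]
  rw [intervalIntegral.integral_comp_mul_add _ (sub_ne_zero.2 hab.symm) a]
  simp

theorem setIntegral_Icc_mul_segmentAverage {a b : ℝ} (hab : a ≤ b) (φ ψ : ℝ → ℝ) :
    ∫ t in Icc a b, φ t * segmentAverage a b ψ =
      (b - a)⁻¹ * ((∫ t in a..b, φ t) * ∫ t in a..b, ψ t) := by
  rw [integral_mul_const, integral_Icc_eq_integral_Ioc, ← intervalIntegral.integral_of_le hab]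
  rcases hab.eq_or_lt with rfl | hlt
  · simp
  · rw [segmentAverage_eq hlt.ne]
    ring

theorem setIntegral_Icc_mul_segmentAverage_comm (a b : ℝ) (φ ψ : ℝ → ℝ) :
    ∫ t in Icc a b, φ t * segmentAverage a b ψ = ∫ t in Icc a b, ψ t * segmentAverage a b φ := by
  rcases le_or_gt a b with hab | hab
  · rw [setIntegral_Icc_mul_segmentAverage hab, setIntegral_Icc_mul_segmentAverage hab,
      mul_comm (∫ t in a..b, φ t)]
  · simp [Icc_eq_empty hab.not_ge]

theorem integral_eq_integral_integral_insertNth {n : ℕ} (i : Fin (n + 1))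
    {h : (Fin (n + 1) → ℝ) → ℝ} (hh : Integrable h) :
    ∫ x, h x = ∫ y : Fin n → ℝ, ∫ t : ℝ, h (i.insertNth t y) := by
  have he := (volume_preserving_piFinSuccAbove (fun _ : Fin (n + 1) => ℝ) i).symm
  rw [← he.integral_comp', Measure.volume_eq_prod, integral_prod_symm]
  · rfl
  · rw [← Measure.volume_eq_prod]
    exact (he.integrable_comp_emb (MeasurableEquiv.measurableEmbedding _)).2 hh

section Resample

variable {ι : Type*} [DecidableEq ι]

def resample (i : ι) (A B g : (ι → ℝ) → ℝ) (x : ι → ℝ) : ℝ :=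
  segmentAverage (A x) (B x) fun t => g (update x i t)

variable {i : ι} {A B : (ι → ℝ) → ℝ}

theorem resample_update (hA : ∀ x t, A (update x i t) = A x)
    (hB : ∀ x t, B (update x i t) = B x) (g : (ι → ℝ) → ℝ) (x : ι → ℝ) (t : ℝ) :
    resample i A B g (update x i t) = resample i A B g x := by
  simp only [resample, hA, hB, update_idem]

theorem measurable_resample (hA : Measurable A) (hB : Measurable B) {g : (ι → ℝ) → ℝ}
    (hg : Measurable g) : Measurable (resample i A B g) := by
  have hpair : Measurable fun p : (ι → ℝ) × ℝ =>
      g (update p.1 i (p.2 * B p.1 + (1 - p.2) * A p.1)) := by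
    fun_prop
  unfold resample segmentAverage
  simp only [intervalIntegral.integral_of_le zero_le_one]
  exact hpair.stronglyMeasurable.integral_prod_right'.measurable

theorem abs_resample_le {g : (ι → ℝ) → ℝ} {C : ℝ} (hg : ∀ x, |g x| ≤ C) (x : ι → ℝ) :
    |resample i A B g x| ≤ C := by
  unfold resample segmentAverage
  simpa using intervalIntegral.norm_integral_le_of_norm_le_const (a := 0) (b := 1)
    fun u _ => (Real.norm_eq_abs _).le.trans (hg (update x i (u * B x + (1 - u) * A x)))

theorem intervalIntegral_sub_eq_resample_sub {g : (ι → ℝ) → ℝ} (hg : Measurable g) {C : ℝ}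
    (hgb : ∀ x, |g x| ≤ C) (x : ι → ℝ) :
    ∫ u in (0 : ℝ)..1, (g (update x i (u * B x + (1 - u) * A x)) - g x) =
      resample i A B g x - g x := by
  have hint : IntervalIntegrable (fun u => g (update x i (u * B x + (1 - u) * A x)))
      volume 0 1 := by
    rw [intervalIntegrable_iff]
    refine Measure.integrableOn_of_bounded (M := C) (by simp)
      (by fun_prop : Measurable _).aestronglyMeasurable (ae_of_all _ fun u => ?_)
    simpa using hgb _
  rw [intervalIntegral.integral_sub hint intervalIntegrable_const, resample, segmentAverage]
  simp

theorem integral_indicator_mul_resample_update_comm {S : Set (ι → ℝ)}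
    (hA : ∀ x t, A (update x i t) = A x) (hB : ∀ x t, B (update x i t) = B x)
    (hS : ∀ x ∈ S, ∀ t, update x i t ∈ S ↔ t ∈ Icc (A x) (B x))
    (f g : (ι → ℝ) → ℝ) (x : ι → ℝ) :
    ∫ t, S.indicator (fun z => f z * resample i A B g z) (update x i t) =
      ∫ t, S.indicator (fun z => g z * resample i A B f z) (update x i t) := by
  by_cases hslice_ne : ∃ t₀, update x i t₀ ∈ S
  · obtain ⟨t₀, ht₀⟩ := hslice_ne
    set x₀ := update x i t₀
    have hx : ∀ t, update x i t = update x₀ i t := fun t => (update_idem ..).symm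
    have hslice : ∀ F G : (ι → ℝ) → ℝ, ∀ t,
        S.indicator (fun z => F z * resample i A B G z) (update x₀ i t) =
          (Icc (A x₀) (B x₀)).indicator
            (fun t => F (update x₀ i t) * resample i A B G x₀) t := by
      intro F G t
      simp only [indicator, hS x₀ ht₀, resample_update hA hB]
    simp only [hx]
    rw [funext (hslice f g), funext (hslice g f), integral_indicator measurableSet_Icc,
      integral_indicator measurableSet_Icc]
    exact setIntegral_Icc_mul_segmentAverage_comm _ _ (fun t => f (update x₀ i t))
      (fun t => g (update x₀ i t))
  · push Not at hslice_ne
    simp [hslice_ne]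

theorem setIntegral_mul_resample_comm {n : ℕ} {i : Fin n} {A B : (Fin n → ℝ) → ℝ}
    {S : Set (Fin n → ℝ)} (hA : ∀ x t, A (update x i t) = A x)
    (hB : ∀ x t, B (update x i t) = B x) (hSm : MeasurableSet S)
    (hS : ∀ x ∈ S, ∀ t, update x i t ∈ S ↔ t ∈ Icc (A x) (B x)) {f g : (Fin n → ℝ) → ℝ}
    (hfg : IntegrableOn (fun x => f x * resample i A B g x) S)
    (hgf : IntegrableOn (fun x => g x * resample i A B f x) S) :
    ∫ x in S, f x * resample i A B g x = ∫ x in S, g x * resample i A B f x := by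
  obtain ⟨m, rfl⟩ : ∃ m, n = m + 1 := ⟨n - 1, by have := i.pos; omega⟩
  rw [← integral_indicator hSm, ← integral_indicator hSm,
    integral_eq_integral_integral_insertNth i ((integrable_indicator_iff hSm).2 hfg),
    integral_eq_integral_integral_insertNth i ((integrable_indicator_iff hSm).2 hgf)]
  refine integral_congr_ae (ae_of_all _ fun y => ?_)
  simpa only [Fin.update_insertNth] using
    integral_indicator_mul_resample_update_comm hA hB hS f g (i.insertNth 0 y)

end Resample

section Simplex

variable {N : ℕ}

theorem measurable_lowerNbr (i : Fin (N - 1)) : Measurable fun x => lowerNbr N x i := by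
  unfold lowerNbr
  by_cases h : 0 < i.val
  · simp only [if_pos h]; exact measurable_pi_apply _
  · simp only [if_neg h]; exact measurable_const

theorem measurable_upperNbr (i : Fin (N - 1)) : Measurable fun x => upperNbr N x i := by
  unfold upperNbr
  by_cases h : i.val + 1 < N - 1
  · simp only [dif_pos h]; exact measurable_pi_apply _
  · simp only [dif_neg h]; exact measurable_const

theorem lowerNbr_update (i : Fin (N - 1)) (x : Fin (N - 1) → ℝ) (t : ℝ) :
    lowerNbr N (update x i t) i = lowerNbr N x i := by
  unfold lowerNbr
  split_ifs
  · exact update_of_ne (Fin.ne_of_val_ne (by dsimp only; omega)) _ _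
  · rfl

theorem upperNbr_update (i : Fin (N - 1)) (x : Fin (N - 1) → ℝ) (t : ℝ) :
    upperNbr N (update x i t) i = upperNbr N x i := by
  unfold upperNbr
  split_ifs
  · exact update_of_ne (Fin.ne_of_val_ne (by dsimp only; omega)) _ _
  · rfl

theorem measurableSet_simplexSet : MeasurableSet (simplexSet N) := by
  have h : simplexSet N = (⋂ i, {x : Fin (N - 1) → ℝ | 0 ≤ x i ∧ x i ≤ N}) ∩
      ⋂ i, ⋂ j, ⋂ (_ : i ≤ j), {x : Fin (N - 1) → ℝ | x i ≤ x j} := by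
    ext x; simp [simplexSet]
  rw [h]
  refine .inter (.iInter fun i => ?_) (.iInter fun i => .iInter fun j => .iInter fun _ => ?_)
  · exact (measurableSet_le measurable_const (measurable_pi_apply i)).inter
      (measurableSet_le (measurable_pi_apply i) measurable_const)
  · exact measurableSet_le (measurable_pi_apply i) (measurable_pi_apply j)

theorem volume_simplexSet_ne_top : volume (simplexSet N) ≠ ⊤ := by
  have hsub : simplexSet N ⊆ Icc 0 fun _ => (N : ℝ) :=
    fun x hx => ⟨fun j => (hx.1 j).1, fun j => (hx.1 j).2⟩
  exact ((Metric.isBounded_Icc _ _).subset hsub).measure_lt_top.ne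

theorem integrableOn_simplexSet_of_bound {φ : (Fin (N - 1) → ℝ) → ℝ} (hφ : Measurable φ)
    {C : ℝ} (hb : ∀ x, |φ x| ≤ C) : IntegrableOn φ (simplexSet N) :=
  Measure.integrableOn_of_bounded volume_simplexSet_ne_top hφ.aestronglyMeasurable
    (ae_of_all _ hb)

variable {x : Fin (N - 1) → ℝ}

theorem zero_le_lowerNbr (hx : x ∈ simplexSet N) (i : Fin (N - 1)) : 0 ≤ lowerNbr N x i := by
  unfold lowerNbr
  split_ifs
  · exact (hx.1 _).1
  · rfl

theorem le_lowerNbr (hx : x ∈ simplexSet N) {i j : Fin (N - 1)} (hji : j < i) :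
    x j ≤ lowerNbr N x i := by
  unfold lowerNbr
  rw [if_pos (by omega)]
  exact hx.2 _ _ (Fin.le_def.2 (by dsimp only; omega))

theorem lowerNbr_le (hx : x ∈ simplexSet N) (i : Fin (N - 1)) : lowerNbr N x i ≤ x i := by
  unfold lowerNbr
  split_ifs
  · exact hx.2 _ _ (Fin.le_def.2 (Nat.sub_le _ _))
  · exact (hx.1 i).1

theorem upperNbr_le (hx : x ∈ simplexSet N) (i : Fin (N - 1)) : upperNbr N x i ≤ N := by
  unfold upperNbr
  split_ifs
  · exact (hx.1 _).2
  · rfl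

theorem upperNbr_le_of_lt (hx : x ∈ simplexSet N) {i k : Fin (N - 1)} (hik : i < k) :
    upperNbr N x i ≤ x k := by
  unfold upperNbr
  rw [dif_pos (by omega)]
  exact hx.2 _ _ (Fin.le_def.2 (by dsimp only; omega))

theorem le_upperNbr (hx : x ∈ simplexSet N) (i : Fin (N - 1)) : x i ≤ upperNbr N x i := by
  unfold upperNbr
  split_ifs
  · exact hx.2 _ _ (Fin.le_def.2 (Nat.le_succ _))
  · exact (hx.1 i).2

theorem update_mem_simplexSet_iff (hx : x ∈ simplexSet N) (i : Fin (N - 1)) (t : ℝ) :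
    update x i t ∈ simplexSet N ↔ t ∈ Icc (lowerNbr N x i) (upperNbr N x i) := by
  constructor
  · intro ht
    have hlow := lowerNbr_le ht i
    have hup := le_upperNbr ht i
    rw [lowerNbr_update, update_self] at hlow
    rw [upperNbr_update, update_self] at hup
    exact ⟨hlow, hup⟩
  · rintro ⟨hlow, hup⟩
    refine ⟨fun j => ?_, fun j k hjk => ?_⟩
    · rcases eq_or_ne j i with rfl | hj
      · rw [update_self]
        exact ⟨(zero_le_lowerNbr hx j).trans hlow, hup.trans (upperNbr_le hx j)⟩
      · rw [update_of_ne hj]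
        exact hx.1 j
    · rcases eq_or_ne j i with rfl | hj
      · rcases eq_or_ne k j with rfl | hk
        · rfl
        · rw [update_self, update_of_ne hk]
          exact hup.trans (upperNbr_le_of_lt hx (lt_of_le_of_ne hjk hk.symm))
      · rcases eq_or_ne k i with rfl | hk
        · rw [update_of_ne hj, update_self]
          exact (le_lowerNbr hx (lt_of_le_of_ne hjk hj)).trans hlow
        · rw [update_of_ne hj, update_of_ne hk]
          exact hx.2 j k hjk

end Simplex

section Generator

variable {N : ℕ} {f g : (Fin (N - 1) → ℝ) → ℝ} {Cf Cg : ℝ}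

theorem simplexGen_eq_sum_resample_sub (hg : Measurable g) (hgb : ∀ x, |g x| ≤ Cg)
    (x : Fin (N - 1) → ℝ) :
    simplexGen N g x =
      ∑ i, (resample i (fun x => lowerNbr N x i) (fun x => upperNbr N x i) g x - g x) :=
  Finset.sum_congr rfl fun i _ => intervalIntegral_sub_eq_resample_sub (i := i)
    (A := fun x => lowerNbr N x i) (B := fun x => upperNbr N x i) hg hgb x

theorem integrableOn_simplexSet_mul (hf : Measurable f) (hg : Measurable g)
    (hfb : ∀ x, |f x| ≤ Cf) (hgb : ∀ x, |g x| ≤ Cg) :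
    IntegrableOn (fun x => f x * g x) (simplexSet N) :=
  integrableOn_simplexSet_of_bound (hf.mul hg) (C := Cf * Cg) fun x => by
    rw [abs_mul]
    exact mul_le_mul (hfb x) (hgb x) (abs_nonneg _) ((abs_nonneg _).trans (hfb x))

theorem integrableOn_simplexSet_mul_resample (hf : Measurable f) (hg : Measurable g)
    (hfb : ∀ x, |f x| ≤ Cf) (hgb : ∀ x, |g x| ≤ Cg) (i : Fin (N - 1)) :
    IntegrableOn (fun x => f x * resample i (fun x => lowerNbr N x i)
      (fun x => upperNbr N x i) g x) (simplexSet N) :=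
  integrableOn_simplexSet_mul hf
    (measurable_resample (measurable_lowerNbr i) (measurable_upperNbr i) hg) hfb
    (abs_resample_le hgb)

theorem setIntegral_mul_simplexGen (hf : Measurable f) (hg : Measurable g)
    (hfb : ∀ x, |f x| ≤ Cf) (hgb : ∀ x, |g x| ≤ Cg) :
    ∫ x in simplexSet N, f x * simplexGen N g x =
      ∑ i, ((∫ x in simplexSet N,
        f x * resample i (fun x => lowerNbr N x i) (fun x => upperNbr N x i) g x) -
          ∫ x in simplexSet N, f x * g x) := by
  have hK := integrableOn_simplexSet_mul_resample hf hg hfb hgb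
  have hfg := integrableOn_simplexSet_mul hf hg hfb hgb
  simp only [simplexGen_eq_sum_resample_sub hg hgb, Finset.mul_sum, mul_sub]
  refine (integral_finsetSum _ fun i _ => ?_).trans (Finset.sum_congr rfl fun i _ => ?_)
  · exact (hK i).sub hfg
  · exact integral_sub (hK i) hfg

theorem setIntegral_mul_simplexGen_comm (hf : Measurable f) (hg : Measurable g)
    (hfb : ∀ x, |f x| ≤ Cf) (hgb : ∀ x, |g x| ≤ Cg) :
    ∫ x in simplexSet N, f x * simplexGen N g x =
      ∫ x in simplexSet N, g x * simplexGen N f x := by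
  rw [setIntegral_mul_simplexGen hf hg hfb hgb, setIntegral_mul_simplexGen hg hf hgb hfb]
  refine Finset.sum_congr rfl fun i _ => ?_
  simp only [mul_comm (f _) (g _)]
  rw [setIntegral_mul_resample_comm (lowerNbr_update i) (upperNbr_update i)
    measurableSet_simplexSet (fun x hx => update_mem_simplexSet_iff hx i)
    (integrableOn_simplexSet_mul_resample hf hg hfb hgb i)
    (integrableOn_simplexSet_mul_resample hg hf hgb hfb i)]

end Generator

end SimplexWalk

theorem simplex_walk_stationary_selfadjoint_general
    (N : ℕ)
    (f g : (Fin (N - 1) → ℝ) → ℝ)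
    (hfm : Measurable f) (hgm : Measurable g)
    (hfb : ∃ C : ℝ, ∀ x, |f x| ≤ C) (hgb : ∃ C : ℝ, ∀ x, |g x| ≤ C) :
    (∫ x, simplexGen N f x ∂(simplexMeasure N)) = 0 ∧
      (∫ x, f x * simplexGen N g x ∂(simplexMeasure N)) =
        ∫ x, g x * simplexGen N f x ∂(simplexMeasure N) := by
  obtain ⟨Cf, hfb⟩ := hfb
  obtain ⟨Cg, hgb⟩ := hgb
  simp only [simplexMeasure, integral_smul_measure]
  refine ⟨?_, by rw [SimplexWalk.setIntegral_mul_simplexGen_comm hfm hgm hfb hgb]⟩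
  have hgen_one : simplexGen N (fun _ => 1) = 0 := by
    funext x
    simp [simplexGen]
  have h := SimplexWalk.setIntegral_mul_simplexGen_comm (f := fun _ => 1) measurable_const hfm
    (Cf := 1) (by simp) hfb
  simp only [one_mul, hgen_one, Pi.zero_apply, mul_zero, integral_zero] at h
  rw [h, smul_zero]

/-- The uniform measure on the simplex is stationary for the random walk on the simplex,
and the generator is self-adjoint in `L²(π_N)`: for bounded measurable `f, g`,
`∫ L_N f dπ_N = 0` and `∫ f · L_N g dπ_N = ∫ g · L_N f dπ_N`. -/
theorem simplex_walk_stationary_selfadjoint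
    (N : ℕ) (hN : 2 ≤ N)
    (f g : (Fin (N - 1) → ℝ) → ℝ)
    (hfm : Measurable f) (hgm : Measurable g)
    (hfb : ∃ C : ℝ, ∀ x, |f x| ≤ C) (hgb : ∃ C : ℝ, ∀ x, |g x| ≤ C) :
    (∫ x, simplexGen N f x ∂(simplexMeasure N)) = 0 ∧
      (∫ x, f x * simplexGen N g x ∂(simplexMeasure N)) =
        ∫ x, g x * simplexGen N f x ∂(simplexMeasure N) :=
  simplex_walk_stationary_selfadjoint_general N f g hfm hgm hfb hgb

end
end
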